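/- arXiv:2008.03159 — 3 statements merged into one kernel-verified Lean document; each statement's English description precedes it below -/
import Mathlib

section
/- For every cofinite partial isometry α of ℤ, the complement ℤ∖dom α and the complement ℤ∖ran α have the same (finite) cardinality. -/
/-!
A partial isometry of a linearly ordered ring whose domain has two points `a ≠ b` is the
restriction of the global isometry `x ↦ ε * (x - a) + f a` with `ε = ±1`: the distances from `a`
and from `b` pin down the image of every other point. This global map is a bijection carrying
`dom α` onto `ran α`, hence also `ℤ ∖ dom α` onto `ℤ ∖ ran α`.
-/

/-- A cofinite partial isometry of ℤ with the usual metric. -/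
def CofIso (f : ℤ →. ℤ) : Prop :=
  f.Domᶜ.Finite ∧ f.ranᶜ.Finite ∧
  (∀ ⦃x y x' y'⦄, x' ∈ f x → y' ∈ f y → x' = y' → x = y) ∧
  (∀ ⦃x y x' y'⦄, x' ∈ f x → y' ∈ f y → |x' - y'| = |x - y|)

open Function

namespace PFun

variable {α β : Type*}

theorem ran_eq_image_dom {f : α →. β} {g : α → β} (hfg : ∀ x y, y ∈ f x → y = g x) :
    f.ran = g '' f.Dom := by
  ext y
  constructor
  · rintro ⟨x, hx⟩
    exact ⟨x, Part.dom_iff_mem.mpr ⟨y, hx⟩, (hfg x y hx).symm⟩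
  · rintro ⟨x, hx, rfl⟩
    have hmem : (f x).get hx ∈ f x := Part.get_mem hx
    exact ⟨x, hfg x _ hmem ▸ hmem⟩

theorem ncard_compl_ran_of_bijective {f : α →. β} {g : α → β} (hg : Bijective g)
    (hfg : ∀ x y, y ∈ f x → y = g x) : f.ranᶜ.ncard = f.Domᶜ.ncard := by
  rw [ran_eq_image_dom hfg, ← Set.image_compl_eq hg]
  exact Set.ncard_image_of_injective _ hg.1

end PFun

theorem bijective_mul_sub_add {R : Type*} [Ring R] {ε : R} (hε : ε * ε = 1) (a p : R) :
    Bijective fun x => ε * (x - a) + p := by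
  refine bijective_iff_has_inverse.mpr ⟨fun y => ε * (y - p) + a, fun x => ?_, fun y => ?_⟩
  · simp only [add_sub_cancel_right, ← mul_assoc, hε, one_mul, sub_add_cancel]
  · simp only [add_sub_cancel_right, ← mul_assoc, hε, one_mul, sub_add_cancel]

theorem exists_mul_self_eq_one_of_abs_eq_abs {R : Type*} [Ring R] [LinearOrder R] [AddLeftMono R]
    {x y : R} (h : |x| = |y|) :
    ∃ ε : R, ε * ε = 1 ∧ x = ε * y := by
  rcases abs_eq_abs.mp h with h | h
  · exact ⟨1, mul_one 1, by rw [h, one_mul]⟩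
  · exact ⟨-1, by rw [neg_mul_neg, one_mul], by rw [h, neg_one_mul]⟩

section LinearOrderedRing

variable {R : Type*} [CommRing R] [LinearOrder R] [IsStrictOrderedRing R]

theorem eq_mul_sub_add_of_abs_sub_eq {a b p q x y ε : R} (hab : a ≠ b) (hε : ε * ε = 1)
    (hpq : q - p = ε * (b - a)) (ha : |y - p| = |x - a|) (hb : |y - q| = |x - b|) :
    y = ε * (x - a) + p := by
  have ha2 : (y - p) ^ 2 = (x - a) ^ 2 := by rw [← sq_abs, ha, sq_abs]
  have hb2 : (y - q) ^ 2 = (x - b) ^ 2 := by rw [← sq_abs, hb, sq_abs]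
  obtain rfl : q = p + ε * (b - a) := eq_add_of_sub_eq' hpq
  -- Subtracting the two squared distance equations leaves an equation linear in `y`.
  have key : (2 * ε * (b - a)) * (y - (ε * (x - a) + p)) = 0 := by
    linear_combination ha2 - hb2 + ((b - a) ^ 2 - 2 * (x - a) * (b - a)) * hε
  have hε0 : ε ≠ 0 := by rintro rfl; simp at hε
  have hc : 2 * ε * (b - a) ≠ 0 :=
    mul_ne_zero (mul_ne_zero two_ne_zero hε0) (sub_ne_zero.mpr hab.symm)
  exact sub_eq_zero.mp ((mul_eq_zero.mp key).resolve_left hc)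

theorem PFun.exists_bijective_extension_of_isometry {f : R →. R}
    (hf : ∀ ⦃x y x' y'⦄, x' ∈ f x → y' ∈ f y → |x' - y'| = |x - y|) (hdom : f.Dom.Nontrivial) :
    ∃ g : R → R, Bijective g ∧ ∀ x y, y ∈ f x → y = g x := by
  obtain ⟨a, ha, b, hb, hab⟩ := hdom
  have hpa : (f a).get ha ∈ f a := Part.get_mem ha
  have hqb : (f b).get hb ∈ f b := Part.get_mem hb
  obtain ⟨ε, hε, hpq⟩ := exists_mul_self_eq_one_of_abs_eq_abs (hf hqb hpa)
  exact ⟨_, bijective_mul_sub_add hε a ((f a).get ha), fun x y hy =>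
    eq_mul_sub_add_of_abs_sub_eq hab hε hpq (hf hy hpa) (hf hy hqb)⟩

end LinearOrderedRing

/-- For every cofinite partial isometry α of ℤ, the complements of the domain and the
range are finite and have the same cardinality. -/
theorem stmt_1 (α : ℤ →. ℤ) (hα : CofIso α) :
    α.Domᶜ.Finite ∧ α.ranᶜ.Finite ∧ α.Domᶜ.ncard = α.ranᶜ.ncard := by
  obtain ⟨hdom, hran, -, hiso⟩ := hα
  have hinf : α.Dom.Infinite := by simpa using hdom.infinite_compl
  obtain ⟨g, hg, hαg⟩ := PFun.exists_bijective_extension_of_isometry hiso hinf.nontrivial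
  exact ⟨hdom, hran, (PFun.ncard_compl_ran_of_bijective hg hαg).symm⟩
end

section
/- The monoid ID∞ of all cofinite partial isometries of ℤ contains no subsemigroup isomorphic to the bicyclic monoid. -/
/-- Multiplication of the bicyclic monoid on pairs: (k,l) stands for q^k p^l and
(q^k p^l)(q^m p^n) = q^{k+m−min(l,m)} p^{l+n−min(l,m)}. -/
def bmul : ℕ × ℕ → ℕ × ℕ → ℕ × ℕ
  | (k, l), (m, n) => (k + m - min l m, l + n - min l m)

namespace PFun

variable {α β γ : Type*}

theorem mem_comp_iff {f : β →. γ} {g : α →. β} {x : α} {z : γ} :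
    z ∈ f.comp g x ↔ ∃ y ∈ g x, z ∈ f y :=
  Part.mem_bind_iff

theorem dom_comp_subset (f : β →. γ) (g : α →. β) : (f.comp g).Dom ⊆ g.Dom := by
  rw [dom_comp]
  exact preimage_subset_dom _ _

theorem ran_comp_subset (f : β →. γ) (g : α →. β) : (f.comp g).ran ⊆ f.ran := by
  rintro z ⟨x, hz⟩
  obtain ⟨y, -, hy⟩ := mem_comp_iff.1 hz
  exact ⟨y, hy⟩

theorem ran_res_id (s : Set α) : (res id s).ran = s := by
  ext x
  simp [ran, mem_res]

theorem eq_res_id_of_comp_self {f : α →. α}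
    (hinj : ∀ ⦃x y z⦄, z ∈ f x → z ∈ f y → x = y) (hf : f.comp f = f) :
    f = res id f.Dom := by
  have fixes : ∀ ⦃x y⦄, y ∈ f x → y = x := by
    intro x y hy
    obtain ⟨z, hz, hyz⟩ := mem_comp_iff.1 (hf.symm ▸ hy)
    obtain rfl := Part.mem_unique hz hy
    exact hinj hyz hy
  ext x y
  rw [mem_res, id]
  constructor
  · intro hy
    exact ⟨(f.mem_dom x).2 ⟨y, hy⟩, (fixes hy).symm⟩
  · rintro ⟨hx, rfl⟩
    obtain ⟨z, hz⟩ := (f.mem_dom x).1 hx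
    obtain rfl := fixes hz
    exact hz

/-- `a, b, e, f` play the roles of the images of `p, q, 1, qp` under a morphism from the
bicyclic monoid. -/
theorem eq_of_bicyclic {a b e f : α →. α} (he : e = res id e.Dom) (hf : f = res id f.Dom)
    (hba : b.comp a = e) (hab : a.comp b = f) (hae : a.comp e = a) (hfa : f.comp a = a)
    (hfe : f.comp e = f) (hindex : a.Domᶜ.ncard = a.ranᶜ.ncard) (hfin : f.Domᶜ.Finite) :
    e = f := by
  have dom_e : e.Dom = a.Dom :=
    (hba ▸ dom_comp_subset b a).antisymm (hae ▸ dom_comp_subset a e)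
  have dom_f : f.Dom = a.ran := by
    rw [← ran_res_id f.Dom, ← hf]
    exact (hab ▸ ran_comp_subset a b).antisymm (hfa ▸ ran_comp_subset f a)
  have dom_f_subset : f.Dom ⊆ e.Dom := hfe ▸ dom_comp_subset f e
  have compl_eq : e.Domᶜ = f.Domᶜ :=
    Set.eq_of_subset_of_ncard_le (Set.compl_subset_compl.2 dom_f_subset)
      (by rw [dom_e, dom_f, hindex]) hfin
  rw [he, hf, compl_inj_iff.1 compl_eq]

end PFun

namespace CofIso

theorem exists_bijective_extension {f : ℤ →. ℤ} (h : CofIso f) :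
    ∃ g : ℤ → ℤ, g.Bijective ∧ ∀ ⦃x y⦄, y ∈ f x → y = g x := by
  obtain ⟨hdom, -, -, hiso⟩ := h
  have hinf : f.Dom.Infinite := by simpa using hdom.infinite_compl
  obtain ⟨x₀, hx₀⟩ := hinf.nonempty
  obtain ⟨x₁, hx₁, hne⟩ := (hinf.sdiff (Set.finite_singleton x₀)).nonempty
  obtain ⟨y₀, hy₀⟩ := (f.mem_dom x₀).1 hx₀
  obtain ⟨y₁, hy₁⟩ := (f.mem_dom x₁).1 hx₁
  -- Two points of the domain fix the isometry `z ↦ ε (z - x₀) + y₀`, with `ε = ±1`.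
  obtain ⟨ε, hε, hslope⟩ : ∃ ε : ℤ, (ε = 1 ∨ ε = -1) ∧ y₁ - y₀ = ε * (x₁ - x₀) := by
    rcases abs_eq_abs.mp (hiso hy₁ hy₀) with h | h
    exacts [⟨1, Or.inl rfl, by linarith⟩, ⟨-1, Or.inr rfl, by linarith⟩]
  have hne : x₁ ≠ x₀ := by simpa using hne
  refine ⟨fun z => ε * (z - x₀) + y₀, ⟨fun u v huv => ?_, fun w => ⟨ε * (w - y₀) + x₀, ?_⟩⟩, ?_⟩
  · dsimp only at huv
    rcases hε with rfl | rfl <;> omega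
  · rcases hε with rfl | rfl <;> ring
  · intro z w hw
    dsimp only
    rcases abs_eq_abs.mp (hiso hw hy₀) with h₀ | h₀ <;>
      rcases abs_eq_abs.mp (hiso hw hy₁) with h₁ | h₁ <;>
      rcases hε with rfl | rfl <;> omega

theorem ncard_compl_dom_eq {f : ℤ →. ℤ} (h : CofIso f) : f.Domᶜ.ncard = f.ranᶜ.ncard := by
  obtain ⟨g, hg, hfg⟩ := h.exists_bijective_extension
  have ran_eq : f.ran = g '' f.Dom := by
    ext y
    constructor
    · rintro ⟨x, hx⟩
      exact ⟨x, (f.mem_dom x).2 ⟨y, hx⟩, (hfg hx).symm⟩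
    · rintro ⟨x, hx, rfl⟩
      obtain ⟨y, hy⟩ := (f.mem_dom x).1 hx
      exact ⟨x, hfg hy ▸ hy⟩
  rw [ran_eq, ← Set.image_compl_eq hg, Set.ncard_image_of_injective _ hg.injective]

end CofIso

/-- The monoid ID∞ of all cofinite partial isometries of ℤ (under composition of partial
maps, first map applied first) contains no subsemigroup isomorphic to the bicyclic monoid:
there is no injective multiplicative map from the bicyclic monoid into ID∞. -/
theorem stmt_2 :
    ¬ ∃ φ : ℕ × ℕ → (ℤ →. ℤ),
      (∀ p, CofIso (φ p)) ∧ Function.Injective φ ∧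
      ∀ p q, φ (bmul p q) = (φ q).comp (φ p) := by
  rintro ⟨φ, hφ, hinj, hmul⟩
  have idem (p) (hp : bmul p p = p) : φ p = PFun.res id (φ p).Dom :=
    PFun.eq_res_id_of_comp_self (fun _ _ _ hx hy => (hφ p).2.2.1 hx hy rfl) (hp ▸ hmul p p).symm
  have hef : φ (0, 0) = φ (1, 1) :=
    PFun.eq_of_bicyclic (a := φ (0, 1)) (b := φ (1, 0)) (idem (0, 0) rfl) (idem (1, 1) rfl)
      (hmul (0, 1) (1, 0)).symm (hmul (1, 0) (0, 1)).symm (hmul (0, 0) (0, 1)).symm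
      (hmul (0, 1) (1, 1)).symm (hmul (0, 0) (1, 1)).symm (hφ (0, 1)).ncard_compl_dom_eq
      (hφ (1, 1)).1
  exact absurd (hinj hef) (by decide)
end

section
/- Let k ≥ 2 be an integer. If γ, δ ∈ IN∞ satisfy n_γ^d − n̲_γ^d ≤ k and n_δ^d − n̲_δ^d ≤ k, then n_{γδ}^d − n̲_{γδ}^d ≤ k. Consequently, for each k ≥ 0, the set IN∞^{g[k]} = {γ ∈ IN∞ : n_γ^d − n̲_γ^d ≤ k} is a subsemigroup of IN∞. -/
/-- A cofinite partial isometry of ℕ with the usual metric. -/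
def CofIsoN (f : ℕ →. ℕ) : Prop :=
  f.Domᶜ.Finite ∧ f.ranᶜ.Finite ∧
  (∀ ⦃x y x' y'⦄, x' ∈ f x → y' ∈ f y → x' = y' → x = y) ∧
  (∀ ⦃x y x' y'⦄, x' ∈ f x → y' ∈ f y → |(x' : ℤ) - (y' : ℤ)| = |(x : ℤ) - (y : ℤ)|)

/-- n̲_η^d : the smallest element of the domain of η. -/
noncomputable def lowd (f : ℕ →. ℕ) : ℕ := sInf f.Dom

/-- n_η^d : the smallest n such that every m ≥ n lies in the domain of η. -/
noncomputable def topd (f : ℕ →. ℕ) : ℕ := sInf {n | ∀ m, n ≤ m → m ∈ f.Dom}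

/-- IN∞^{g[k]} = {γ ∈ IN∞ : n_γ^d − n̲_γ^d ≤ k}. -/
def gpart (k : ℕ) : Set (ℕ →. ℕ) := {γ | CofIsoN γ ∧ topd γ - lowd γ ≤ k}

/-!
Every element of IN∞ is a shift `x ↦ x + c` on its domain. If `γ` shifts by `c`, then in the
product `γδ` (apply `γ` first) every `x` with `x ≥ n_γ^d` and `x + c ≥ n_δ^d` lies in `dom (γδ)`,
while the least point `x` of `dom (γδ)` satisfies `x ≥ n̲_γ^d` and `x + c ≥ n̲_δ^d`. Hence
`n_{γδ}^d ≤ max (n_γ^d, n_δ^d - c)` and `n̲_{γδ}^d ≥ max (n̲_γ^d, n̲_δ^d - c)`, so the gap of `γδ`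
is at most the larger of the gaps of `γ` and `δ`.
-/

theorem PFun.mem_comp_iff_s14 {α β γ : Type*} {f : β →. γ} {g : α →. β} {a : α} {c : γ} :
    c ∈ f.comp g a ↔ ∃ b ∈ g a, c ∈ f b :=
  Part.mem_bind_iff

section DomainBounds

variable {f : ℕ →. ℕ}

theorem mem_dom_of_topd_le (hf : f.Domᶜ.Finite) {m : ℕ} (hm : topd f ≤ m) : m ∈ f.Dom := by
  obtain ⟨B, hB⟩ := hf.bddAbove
  have htail : ∀ m, B + 1 ≤ m → m ∈ f.Dom := fun m hm => by
    by_contra h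
    exact absurd (hB h) (by omega)
  exact Nat.sInf_mem (s := {n | ∀ m, n ≤ m → m ∈ f.Dom}) ⟨B + 1, htail⟩ m hm

theorem topd_le_of_forall_mem_dom {n : ℕ} (h : ∀ m, n ≤ m → m ∈ f.Dom) : topd f ≤ n :=
  Nat.sInf_le h

theorem lowd_le_of_mem_dom {x : ℕ} (h : x ∈ f.Dom) : lowd f ≤ x := Nat.sInf_le h

theorem lowd_mem_dom (h : f.Dom.Nonempty) : lowd f ∈ f.Dom := Nat.sInf_mem h

end DomainBounds

theorem exists_shift_of_isometry {f : ℕ →. ℕ} (hdom : f.Dom.Infinite)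
    (hiso : ∀ ⦃x y x' y'⦄, x' ∈ f x → y' ∈ f y → |(x' : ℤ) - (y' : ℤ)| = |(x : ℤ) - (y : ℤ)|) :
    ∃ c : ℤ, ∀ x y, y ∈ f x → (y : ℤ) = x + c := by
  obtain ⟨a, ha⟩ := hdom.nonempty
  obtain ⟨fa, hfa⟩ := (PFun.mem_dom f a).1 ha
  obtain ⟨b, hb, hba⟩ := hdom.exists_gt (fa + a)
  obtain ⟨fb, hfb⟩ := (PFun.mem_dom f b).1 hb
  refine ⟨(fa : ℤ) - a, ?_⟩
  -- `b` lies so far to the right of `a` that `f` cannot reverse the orientation of `{a, b}`.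
  have hfb_shift : (fb : ℤ) = b + ((fa : ℤ) - a) := by
    have := hiso hfb hfa
    rcases abs_eq_abs.1 this with h | h <;> omega
  intro x y hy
  have h_b := hiso hy hfb
  have h_a := hiso hy hfa
  rcases abs_eq_abs.1 h_b with h | h
  · omega
  · rcases abs_eq_abs.1 h_a with h' | h' <;> omega

theorem CofIsoN.exists_shift {f : ℕ →. ℕ} (hf : CofIsoN f) :
    ∃ c : ℤ, ∀ x y, y ∈ f x → (y : ℤ) = x + c :=
  exists_shift_of_isometry (Set.Finite.infinite_compl hf.1 |>.mono (by simp)) hf.2.2.2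

section Comp

variable {γ δ : ℕ →. ℕ} {c : ℤ}

theorem mem_dom_comp_of_le (hγ : γ.Domᶜ.Finite) (hδ : δ.Domᶜ.Finite)
    (hc : ∀ x y, y ∈ γ x → (y : ℤ) = x + c) {x : ℕ}
    (hx : max (topd γ : ℤ) (topd δ - c) ≤ x) : x ∈ (δ.comp γ).Dom := by
  obtain ⟨y, hy⟩ := (PFun.mem_dom γ x).1 (mem_dom_of_topd_le hγ (by omega))
  have hyδ : y ∈ δ.Dom := mem_dom_of_topd_le hδ (by have := hc x y hy; omega)
  rw [PFun.dom_comp]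
  exact ⟨y, hyδ, hy⟩

theorem topd_comp_le (hγ : γ.Domᶜ.Finite) (hδ : δ.Domᶜ.Finite)
    (hc : ∀ x y, y ∈ γ x → (y : ℤ) = x + c) :
    (topd (δ.comp γ) : ℤ) ≤ max (topd γ : ℤ) (topd δ - c) := by
  have := topd_le_of_forall_mem_dom (f := δ.comp γ)
    (n := (max (topd γ : ℤ) (topd δ - c)).toNat)
    fun m hm => mem_dom_comp_of_le hγ hδ hc (by omega)
  omega

theorem le_lowd_comp (hγ : γ.Domᶜ.Finite) (hδ : δ.Domᶜ.Finite)
    (hc : ∀ x y, y ∈ γ x → (y : ℤ) = x + c) :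
    max (lowd γ : ℤ) (lowd δ - c) ≤ lowd (δ.comp γ) := by
  have hne : (δ.comp γ).Dom.Nonempty :=
    ⟨_, mem_dom_comp_of_le hγ hδ hc (x := (max (topd γ : ℤ) (topd δ - c)).toNat) (by omega)⟩
  have hmem := lowd_mem_dom hne
  rw [PFun.dom_comp] at hmem
  obtain ⟨y, hyδ, hy : y ∈ γ _⟩ := hmem
  have := lowd_le_of_mem_dom hyδ
  have := lowd_le_of_mem_dom ((PFun.mem_dom γ _).2 ⟨y, hy⟩)
  have := hc _ _ hy
  omega

theorem CofIsoN.topd_sub_lowd_comp_le (hγ : CofIsoN γ) (hδ : CofIsoN δ) :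
    topd (δ.comp γ) - lowd (δ.comp γ) ≤ max (topd γ - lowd γ) (topd δ - lowd δ) := by
  obtain ⟨c, hc⟩ := hγ.exists_shift
  have htop := topd_comp_le hγ.1 hδ.1 hc
  have hlow := le_lowd_comp hγ.1 hδ.1 hc
  omega

theorem compl_dom_comp_finite (hγ : γ.Domᶜ.Finite) (hδ : δ.Domᶜ.Finite)
    (hc : ∀ x y, y ∈ γ x → (y : ℤ) = x + c) : (δ.comp γ).Domᶜ.Finite := by
  refine (Set.finite_Iio (max (topd γ : ℤ) (topd δ - c)).toNat).subset fun x hx => ?_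
  by_contra hlt
  exact hx (mem_dom_comp_of_le hγ hδ hc (by simp only [Set.mem_Iio] at hlt; omega))

theorem compl_ran_comp_finite (hγ : γ.ranᶜ.Finite) (hδ : δ.ranᶜ.Finite)
    (hc : ∀ x y, y ∈ δ x → (y : ℤ) = x + c) : (δ.comp γ).ranᶜ.Finite := by
  obtain ⟨B, hB⟩ := hγ.bddAbove
  refine (hδ.union (Set.finite_Iic (B + c.natAbs))).subset fun z hz => ?_
  by_cases hzδ : z ∈ δ.ran
  · obtain ⟨y, hy⟩ := hzδ
    have hyγ : y ∉ γ.ran := fun ⟨x, hx⟩ => hz ⟨x, PFun.mem_comp_iff_s14.2 ⟨y, hx, hy⟩⟩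
    have := hB hyγ
    have := hc _ _ hy
    exact Or.inr (show z ≤ B + c.natAbs by omega)
  · exact Or.inl hzδ

theorem CofIsoN.comp (hγ : CofIsoN γ) (hδ : CofIsoN δ) : CofIsoN (δ.comp γ) := by
  obtain ⟨cγ, hcγ⟩ := hγ.exists_shift
  obtain ⟨cδ, hcδ⟩ := hδ.exists_shift
  refine ⟨compl_dom_comp_finite hγ.1 hδ.1 hcγ, compl_ran_comp_finite hγ.2.1 hδ.2.1 hcδ, ?_, ?_⟩
  · intro x y x' y' hx' hy' hxy
    obtain ⟨u, hu, hux⟩ := PFun.mem_comp_iff_s14.1 hx'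
    obtain ⟨v, hv, hvy⟩ := PFun.mem_comp_iff_s14.1 hy'
    exact hγ.2.2.1 hu hv (hδ.2.2.1 hux hvy hxy)
  · intro x y x' y' hx' hy'
    obtain ⟨u, hu, hux⟩ := PFun.mem_comp_iff_s14.1 hx'
    obtain ⟨v, hv, hvy⟩ := PFun.mem_comp_iff_s14.1 hy'
    rw [hδ.2.2.2 hux hvy, hγ.2.2.2 hu hv]

end Comp

/-- If k ≥ 2 and γ, δ ∈ IN∞ satisfy n_γ^d − n̲_γ^d ≤ k and n_δ^d − n̲_δ^d ≤ k, then
n_{γδ}^d − n̲_{γδ}^d ≤ k (γδ applies γ first); consequently, for every k ≥ 0 the set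
IN∞^{g[k]} is a subsemigroup of IN∞. -/
theorem stmt_14 :
    (∀ k : ℕ, 2 ≤ k → ∀ γ δ : ℕ →. ℕ, CofIsoN γ → CofIsoN δ →
      topd γ - lowd γ ≤ k → topd δ - lowd δ ≤ k →
      topd (δ.comp γ) - lowd (δ.comp γ) ≤ k) ∧
    (∀ k : ℕ, ∀ γ ∈ gpart k, ∀ δ ∈ gpart k, δ.comp γ ∈ gpart k) := by
  refine ⟨fun k _ γ δ hγ hδ hγk hδk => ?_, fun k γ hγ δ hδ => ?_⟩
  · exact (hγ.topd_sub_lowd_comp_le hδ).trans (max_le hγk hδk)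
  · exact ⟨hγ.1.comp hδ.1, (hγ.1.topd_sub_lowd_comp_le hδ.1).trans (max_le hγ.2 hδ.2)⟩
end
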